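/- Let n ≥ 8 and let φ : SL_n(ℂ) → SU_n be a homotopy equivalence which preserves commutativity and satisfies φ(Z(SL_n(ℂ))) = Z(SU_n). Suppose Q, Q' ∈ Her⁺(ℂⁿ) and L ∈ ℙ(ℂⁿ) satisfy L^{⊥_Q} = L^{⊥_{Q'}}, and suppose L', L'' ∈ ℙ(ℂⁿ) satisfy φ(σ_Q^L) ⊆ σ_{Q₀}^{L'} and φ(σ_{Q'}^L) ⊆ σ_{Q₀}^{L''}. Then L' = L''. -/

import Mathlib

open scoped ComplexOrder

/-- The special linear group `SL_n(ℂ)`, as the subspace of `n × n` complex matrices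
of determinant `1`. -/
abbrev SL (n : ℕ) : Type := {A : Matrix (Fin n) (Fin n) ℂ // A.det = 1}

/-- The Hermitian form associated to a matrix `M`: `(u, v) ↦ conj(u)ᵀ M v`.  For `M = 1`
this is the standard Hermitian form `Q₀((uᵢ),(vᵢ)) = Σᵢ conj(uᵢ)·vᵢ`. -/
noncomputable def form {n : ℕ} (M : Matrix (Fin n) (Fin n) ℂ) (u v : Fin n → ℂ) : ℂ :=
  dotProduct (star u) (M.mulVec v)

/-- The subgroup `SU(Q) ⊆ SL_n(ℂ)` of matrices preserving the Hermitian form of `M`.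
For `M = 1` this is the special unitary group `SU_n`. -/
def SUQ {n : ℕ} (M : Matrix (Fin n) (Fin n) ℂ) : Set (SL n) :=
  {A | ∀ u v : Fin n → ℂ, form M (A.val.mulVec u) (A.val.mulVec v) = form M u v}

/-- The center of `SL_n(ℂ)` (equal to the center of `SU_n`): scalar matrices `ζ • 1`
with `ζ` an `n`-th root of unity. -/
def centerSL (n : ℕ) : Set (SL n) :=
  {A | ∃ ζ : ℂ, ζ ^ n = 1 ∧ A.val = ζ • (1 : Matrix (Fin n) (Fin n) ℂ)}

/-- The `Q`-orthogonal complement of a subspace `W`, for the Hermitian form of `M`. -/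
def perp {n : ℕ} (M : Matrix (Fin n) (Fin n) ℂ) (W : Submodule ℂ (Fin n → ℂ)) :
    Set (Fin n → ℂ) :=
  {u | ∀ v ∈ W, form M u v = 0}

/-- The subgroup `σ_Q^L ⊆ SU(Q)` of elements acting as a scalar on the line `L` and as
a scalar on its `Q`-orthogonal complement `L^{⊥_Q}`. -/
def sigmaQ {n : ℕ} (M : Matrix (Fin n) (Fin n) ℂ) (L : Projectivization ℂ (Fin n → ℂ)) :
    Set (SL n) :=
  {A | A ∈ SUQ M ∧ ∃ a b : ℂ, (∀ v ∈ L.submodule, A.val.mulVec v = a • v) ∧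
    (∀ u ∈ perp M L.submodule, A.val.mulVec u = b • u)}

/-- The space `Her⁺(ℂⁿ)` of positive definite Hermitian forms on `ℂⁿ`, realized as
positive definite Hermitian `n × n` matrices with the subspace topology. -/
abbrev HerPos (n : ℕ) : Type := {M : Matrix (Fin n) (Fin n) ℂ // M.PosDef}

/-- A map `SL_n(ℂ) → SU_n` preserves commutativity if it sends commuting pairs of
matrices to commuting pairs. -/
def PreservesComm {n : ℕ} (φ : SL n → ↥(SUQ (1 : Matrix (Fin n) (Fin n) ℂ))) : Prop :=
  ∀ A B : SL n, A.val * B.val = B.val * A.val →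
    (φ A).val.val * (φ B).val.val = (φ B).val.val * (φ A).val.val

/-- `φ(Z(SL_n(ℂ))) = Z(SU_n)`: the image of the center of `SL_n(ℂ)` is exactly the
center of `SU_n`. -/
def MapsCenterOnto {n : ℕ} (φ : SL n → ↥(SUQ (1 : Matrix (Fin n) (Fin n) ℂ))) : Prop :=
  φ '' centerSL n = {B : ↥(SUQ (1 : Matrix (Fin n) (Fin n) ℂ)) | B.val ∈ centerSL n}

/-!
If `L' ≠ L''`, then `φ` sends every element of `σ_Q^L ∩ σ_{Q'}^L` to a matrix that is scalar on
two distinct lines and on their orthogonal complements; since `n ≥ 3` these complements meet, so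
the matrix is scalar, i.e. central in `SU_n`. The intersection `σ_Q^L ∩ σ_{Q'}^L` contains the loop
acting as `e^{-(n-1)it}` on `L` and as `e^{it}` on the common complement `L^⊥`, which passes
through every central element of `SL_n(ℂ)`. The center of `SU_n` is finite, so by continuity `φ`
is constant on the center of `SL_n(ℂ)`, whose image would then be a single point; but the center
of `SU_n` has at least two elements.
-/

open Matrix
open scoped LinearAlgebra.Projectivization

section HermitianForm

variable {n : ℕ} {M : Matrix (Fin n) (Fin n) ℂ}

lemma form_add_left (M : Matrix (Fin n) (Fin n) ℂ) (u v w : Fin n → ℂ) :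
    form M (u + v) w = form M u w + form M v w := by
  simp [form, add_dotProduct]

lemma form_add_right (M : Matrix (Fin n) (Fin n) ℂ) (u v w : Fin n → ℂ) :
    form M u (v + w) = form M u v + form M u w := by
  simp [form, mulVec_add, dotProduct_add]

lemma form_smul_left (M : Matrix (Fin n) (Fin n) ℂ) (c : ℂ) (u v : Fin n → ℂ) :
    form M (c • u) v = star c * form M u v := by
  simp [form, smul_dotProduct]

lemma form_smul_right (M : Matrix (Fin n) (Fin n) ℂ) (c : ℂ) (u v : Fin n → ℂ) :
    form M u (c • v) = c * form M u v := by
  simp [form, mulVec_smul, dotProduct_smul]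

lemma star_form (hM : M.IsHermitian) (u v : Fin n → ℂ) : star (form M u v) = form M v u := by
  rw [form, form, ← star_dotProduct, star_mulVec, dotProduct_mulVec, hM.eq]

lemma star_mulVec_dotProduct (M : Matrix (Fin n) (Fin n) ℂ) (w x : Fin n → ℂ) :
    star (M *ᵥ w) ⬝ᵥ x = star (form M x w) :=
  star_dotProduct _ _

lemma form_self_ne_zero (hM : M.PosDef) {x : Fin n → ℂ} (hx : x ≠ 0) : form M x x ≠ 0 :=
  (hM.dotProduct_mulVec_pos hx).ne'

lemma mem_perp_iff (M : Matrix (Fin n) (Fin n) ℂ) (L : ℙ ℂ (Fin n → ℂ)) (u : Fin n → ℂ) :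
    u ∈ perp M L.submodule ↔ form M u L.rep = 0 := by
  refine ⟨fun h => h _ (L.submodule_eq ▸ Submodule.mem_span_singleton_self _), fun h v hv => ?_⟩
  obtain ⟨c, rfl⟩ := Submodule.mem_span_singleton.1 (L.submodule_eq ▸ hv)
  rw [form_smul_right, h, mul_zero]

lemma smul_mem_perp {W : Submodule ℂ (Fin n → ℂ)} (c : ℂ) {p : Fin n → ℂ}
    (hp : p ∈ perp M W) : c • p ∈ perp M W := fun v hv => by
  rw [form_smul_left, hp v hv, mul_zero]

lemma eq_zero_of_mem_of_mem_perp (hM : M.PosDef) {W : Submodule ℂ (Fin n → ℂ)}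
    {x : Fin n → ℂ} (hx : x ∈ W) (hx' : x ∈ perp M W) : x = 0 :=
  not_not.1 fun h => form_self_ne_zero hM h (hx' x hx)

lemma exists_add_mem_perp (hM : M.PosDef) (L : ℙ ℂ (Fin n → ℂ)) (u : Fin n → ℂ) :
    ∃ x ∈ L.submodule, ∃ p ∈ perp M L.submodule, u = x + p := by
  have hr := form_self_ne_zero hM L.rep_nonzero
  set c := form M L.rep u / form M L.rep L.rep
  refine ⟨c • L.rep, L.submodule_eq ▸ Submodule.smul_mem _ _ (Submodule.mem_span_singleton_self _),
    u - c • L.rep, ?_, by abel⟩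
  rw [mem_perp_iff, sub_eq_add_neg, form_add_left, ← neg_smul, form_smul_left, star_neg,
    star_div₀, star_form hM.1, star_form hM.1]
  field_simp
  ring

lemma exists_ne_zero_mem_perp_mem_perp (hn : 3 ≤ n) (M : Matrix (Fin n) (Fin n) ℂ)
    (L₁ L₂ : ℙ ℂ (Fin n → ℂ)) :
    ∃ w ≠ 0, w ∈ perp M L₁.submodule ∧ w ∈ perp M L₂.submodule := by
  set f := (Matrix.of ![star (M *ᵥ L₁.rep), star (M *ᵥ L₂.rep)]).mulVecLin
  have hker : LinearMap.ker f ≠ ⊥ := LinearMap.ker_ne_bot_of_finrank_lt (by simp; omega)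
  obtain ⟨w, hw, hw0⟩ := (Submodule.ne_bot_iff _).1 hker
  have hw i := congrFun (LinearMap.mem_ker.1 hw) i
  refine ⟨w, hw0, ?_, ?_⟩ <;> rw [mem_perp_iff, ← star_eq_zero, ← star_mulVec_dotProduct]
  · simpa [f] using hw 0
  · simpa [f] using hw 1

end HermitianForm

section LineScalars

variable {n : ℕ} {M B : Matrix (Fin n) (Fin n) ℂ} {L : ℙ ℂ (Fin n → ℂ)}

lemma rep_mem_submodule (L : ℙ ℂ (Fin n → ℂ)) : L.rep ∈ L.submodule :=
  L.submodule_eq ▸ Submodule.mem_span_singleton_self _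

lemma ne_zero_of_projectivization (L : ℙ ℂ (Fin n → ℂ)) : n ≠ 0 := by
  rintro rfl
  exact L.rep_nonzero (Subsingleton.elim _ _)

lemma eq_of_rep_mem_submodule {L₁ L₂ : ℙ ℂ (Fin n → ℂ)} (h : L₁.rep ∈ L₂.submodule) :
    L₁ = L₂ := by
  obtain ⟨c, hc⟩ := Submodule.mem_span_singleton.1 (L₂.submodule_eq ▸ h)
  rw [← L₁.mk_rep, ← L₂.mk_rep, Projectivization.mk_eq_mk_iff']
  exact ⟨c, hc⟩

lemma eq_smul_one_of_mulVec_eq_smul {c : ℂ} (h : ∀ u, B *ᵥ u = c • u) : B = c • 1 := by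
  ext i j
  simpa [mulVec_single, Pi.single_apply, one_apply] using congrFun (h (Pi.single j 1)) i

lemma eq_smul_one_of_mulVec_mem_perp (hM : M.PosDef) {c : ℂ}
    (hL : ∀ v ∈ L.submodule, B *ᵥ v = c • v) (hperp : ∀ u ∈ perp M L.submodule, B *ᵥ u = c • u) :
    B = c • 1 :=
  eq_smul_one_of_mulVec_eq_smul fun u => by
    obtain ⟨x, hx, p, hp, rfl⟩ := exists_add_mem_perp hM L u
    rw [mulVec_add, hL x hx, hperp p hp, smul_add]

lemma mem_submodule_of_mulVec_eq_smul (hM : M.PosDef) {a b c : ℂ} {v : Fin n → ℂ}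
    (hL : ∀ v ∈ L.submodule, B *ᵥ v = a • v) (hperp : ∀ u ∈ perp M L.submodule, B *ᵥ u = b • u)
    (hv : B *ᵥ v = c • v) (hcb : c ≠ b) : v ∈ L.submodule := by
  obtain ⟨x, hx, p, hp, rfl⟩ := exists_add_mem_perp hM L v
  rw [mulVec_add, hL x hx, hperp p hp] at hv
  have hxp : (c - b) • p = (a - c) • x := by linear_combination (norm := module) -hv
  have hp0 : (c - b) • p = 0 :=
    eq_zero_of_mem_of_mem_perp hM (hxp ▸ Submodule.smul_mem _ _ hx) (smul_mem_perp _ hp)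
  rw [(smul_eq_zero.1 hp0).resolve_left (sub_ne_zero.2 hcb), add_zero]
  exact hx

lemma exists_eq_smul_one_of_ne (hn : 3 ≤ n) (hM : M.PosDef) {L₁ L₂ : ℙ ℂ (Fin n → ℂ)}
    (hL : L₁ ≠ L₂) {a₁ b₁ a₂ b₂ : ℂ}
    (ha₁ : ∀ v ∈ L₁.submodule, B *ᵥ v = a₁ • v) (hb₁ : ∀ u ∈ perp M L₁.submodule, B *ᵥ u = b₁ • u)
    (ha₂ : ∀ v ∈ L₂.submodule, B *ᵥ v = a₂ • v) (hb₂ : ∀ u ∈ perp M L₂.submodule, B *ᵥ u = b₂ • u) :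
    ∃ c : ℂ, B = c • 1 := by
  obtain ⟨w, hw0, hw₁, hw₂⟩ := exists_ne_zero_mem_perp_mem_perp hn M L₁ L₂
  have hb : b₁ = b₂ := smul_left_injective ℂ hw0 ((hb₁ w hw₁).symm.trans (hb₂ w hw₂))
  by_cases hab : a₁ = b₁
  · exact ⟨b₁, eq_smul_one_of_mulVec_mem_perp hM (hab ▸ ha₁) hb₁⟩
  · exact absurd (eq_of_rep_mem_submodule (mem_submodule_of_mulVec_eq_smul hM ha₂ hb₂
      (ha₁ _ (rep_mem_submodule L₁)) (hb ▸ hab))) hL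

end LineScalars

section LineDiagonal

variable {n : ℕ} {M : Matrix (Fin n) (Fin n) ℂ} {L : ℙ ℂ (Fin n → ℂ)}

noncomputable def lineProj (M : Matrix (Fin n) (Fin n) ℂ) (L : ℙ ℂ (Fin n → ℂ)) :
    Matrix (Fin n) (Fin n) ℂ :=
  (form M L.rep L.rep)⁻¹ • vecMulVec L.rep (star (M *ᵥ L.rep))

lemma lineProj_mulVec (M : Matrix (Fin n) (Fin n) ℂ) (L : ℙ ℂ (Fin n → ℂ)) (x : Fin n → ℂ) :
    lineProj M L *ᵥ x = (star (form M x L.rep) / form M L.rep L.rep) • L.rep := by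
  rw [lineProj, smul_mulVec, vecMulVec_mulVec, star_mulVec_dotProduct, op_smul_eq_smul, smul_smul,
    div_eq_inv_mul]

lemma lineProj_mulVec_of_mem (hM : M.PosDef) {x : Fin n → ℂ} (hx : x ∈ L.submodule) :
    lineProj M L *ᵥ x = x := by
  obtain ⟨c, rfl⟩ := Submodule.mem_span_singleton.1 (L.submodule_eq ▸ hx)
  rw [lineProj_mulVec, form_smul_left, star_mul, star_star, star_form hM.1,
    mul_div_cancel_left₀ c (form_self_ne_zero hM L.rep_nonzero)]

lemma lineProj_mulVec_of_mem_perp {p : Fin n → ℂ} (hp : p ∈ perp M L.submodule) :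
    lineProj M L *ᵥ p = 0 := by
  rw [lineProj_mulVec, (mem_perp_iff M L p).1 hp, star_zero, zero_div, zero_smul]

noncomputable def lineDiag (M : Matrix (Fin n) (Fin n) ℂ) (L : ℙ ℂ (Fin n → ℂ)) (a b : ℂ) :
    Matrix (Fin n) (Fin n) ℂ :=
  b • 1 + (a - b) • lineProj M L

lemma lineDiag_mulVec_of_mem (hM : M.PosDef) (a b : ℂ) {x : Fin n → ℂ}
    (hx : x ∈ L.submodule) : lineDiag M L a b *ᵥ x = a • x := by
  rw [lineDiag, add_mulVec, smul_mulVec, smul_mulVec, one_mulVec, lineProj_mulVec_of_mem hM hx,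
    ← add_smul, add_sub_cancel]

lemma lineDiag_mulVec_of_mem_perp (a b : ℂ) {p : Fin n → ℂ} (hp : p ∈ perp M L.submodule) :
    lineDiag M L a b *ᵥ p = b • p := by
  rw [lineDiag, add_mulVec, smul_mulVec, smul_mulVec, one_mulVec, lineProj_mulVec_of_mem_perp hp,
    smul_zero, add_zero]

lemma det_lineDiag (hM : M.PosDef) (a : ℂ) {b : ℂ} (hb : b ≠ 0) :
    (lineDiag M L a b).det = a * b ^ (n - 1) := by
  obtain ⟨k, rfl⟩ := Nat.exists_eq_add_one_of_ne_zero (ne_zero_of_projectivization L)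
  have hr := form_self_ne_zero hM L.rep_nonzero
  have hdiag : lineDiag M L a b =
      b • (1 + vecMulVec ((b⁻¹ * (a - b) / form M L.rep L.rep) • L.rep) (star (M *ᵥ L.rep))) := by
    rw [lineDiag, lineProj, smul_add, smul_vecMulVec, smul_smul, smul_smul]
    congr 2
    field_simp
  rw [hdiag, det_smul, vecMulVec_eq Unit, det_one_add_replicateCol_mul_replicateRow, dotProduct_smul,
    star_mulVec_dotProduct, star_form hM.1, Fintype.card_fin, smul_eq_mul, Nat.add_sub_cancel]
  field_simp
  ring

end LineDiagonal

section Center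

variable {n : ℕ} {M : Matrix (Fin n) (Fin n) ℂ} {L : ℙ ℂ (Fin n → ℂ)}

lemma star_mul_self_eq_one_of_norm_eq_one {z : ℂ} (h : ‖z‖ = 1) : star z * z = 1 := by
  rw [Complex.star_def, Complex.conj_mul', h, Complex.ofReal_one, one_pow]

lemma mem_sigmaQ_of_mulVec (hM : M.PosDef) {A : SL n} {a b : ℂ}
    (ha : star a * a = 1) (hb : star b * b = 1)
    (hL : ∀ v ∈ L.submodule, A.val *ᵥ v = a • v)
    (hperp : ∀ u ∈ perp M L.submodule, A.val *ᵥ u = b • u) :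
    A ∈ sigmaQ M L := by
  refine ⟨fun u v => ?_, a, b, hL, hperp⟩
  obtain ⟨xu, hxu, pu, hpu, rfl⟩ := exists_add_mem_perp hM L u
  obtain ⟨xv, hxv, pv, hpv, rfl⟩ := exists_add_mem_perp hM L v
  have hpx : form M pu xv = 0 := hpu xv hxv
  have hxp : form M xu pv = 0 := by rw [← star_form hM.1, hpv xu hxu, star_zero]
  simp only [mulVec_add, hL xu hxu, hL xv hxv, hperp pu hpu, hperp pv hpv, form_add_left,
    form_add_right, form_smul_left, form_smul_right, hpx, hxp, mul_zero, add_zero, zero_add]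
  linear_combination form M xu xv * ha + form M pu pv * hb

def scalarSL (ζ : ℂ) (hζ : ζ ^ n = 1) : SL n :=
  ⟨ζ • 1, by rw [det_smul, det_one, Fintype.card_fin, hζ, mul_one]⟩

lemma scalarSL_mem_SUQ (hn : n ≠ 0) (M : Matrix (Fin n) (Fin n) ℂ) {ζ : ℂ} (hζ : ζ ^ n = 1) :
    scalarSL ζ hζ ∈ SUQ M := fun u v => by
  rw [scalarSL, smul_mulVec, smul_mulVec, one_mulVec, one_mulVec, form_smul_left, form_smul_right,
    ← mul_assoc, star_mul_self_eq_one_of_norm_eq_one (Complex.norm_eq_one_of_pow_eq_one hζ hn),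
    one_mul]

lemma centerSL_finite (hn : 0 < n) : (centerSL n).Finite := by
  refine (Set.finite_range fun ζ : Polynomial.nthRootsFinset n (1 : ℂ) =>
    scalarSL ζ.1 ((Polynomial.mem_nthRootsFinset hn _).1 ζ.2)).subset ?_
  rintro A ⟨ζ, hζ, hA⟩
  exact ⟨⟨ζ, (Polynomial.mem_nthRootsFinset hn _).2 hζ⟩, Subtype.ext hA.symm⟩

lemma not_subsingleton_centerSU (hn : 2 ≤ n) :
    ¬ {B : SUQ (1 : Matrix (Fin n) (Fin n) ℂ) | B.val ∈ centerSL n}.Subsingleton := by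
  intro h
  have hζ := Complex.isPrimitiveRoot_exp n (by omega)
  have h1ζ := @h ⟨scalarSL 1 (one_pow n), scalarSL_mem_SUQ (by omega) _ _⟩ ⟨1, one_pow n, rfl⟩
    ⟨scalarSL _ hζ.pow_eq_one, scalarSL_mem_SUQ (by omega) _ _⟩ ⟨_, hζ.pow_eq_one, rfl⟩
  have := congrFun (congrFun (congrArg (fun B => B.val.val) h1ζ) ⟨0, by omega⟩) ⟨0, by omega⟩
  simp only [scalarSL, one_smul, one_apply_eq, Matrix.smul_apply, smul_eq_mul, mul_one] at this
  exact hζ.ne_one (by omega) this.symm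

lemma mem_centerSL_of_val_eq_smul_one {A : SL n} {c : ℂ} (h : A.val = c • 1) :
    A ∈ centerSL n :=
  ⟨c, by simpa [h, det_smul] using A.prop, h⟩

lemma mem_centerSL_of_mem_sigmaQ_of_ne (hn : 3 ≤ n) (hM : M.PosDef) {A : SL n}
    {L₁ L₂ : ℙ ℂ (Fin n → ℂ)} (hL : L₁ ≠ L₂) (h₁ : A ∈ sigmaQ M L₁) (h₂ : A ∈ sigmaQ M L₂) :
    A ∈ centerSL n := by
  obtain ⟨-, a₁, b₁, ha₁, hb₁⟩ := h₁
  obtain ⟨-, a₂, b₂, ha₂, hb₂⟩ := h₂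
  obtain ⟨c, hc⟩ := exists_eq_smul_one_of_ne hn hM hL ha₁ hb₁ ha₂ hb₂
  exact mem_centerSL_of_val_eq_smul_one hc

end Center

section Loop

open Complex

variable {n : ℕ} {M : Matrix (Fin n) (Fin n) ℂ}

lemma star_mul_self_exp_mul_I (t : ℝ) : star (exp (t * I)) * exp (t * I) = 1 :=
  star_mul_self_eq_one_of_norm_eq_one (norm_exp_ofReal_mul_I t)

noncomputable def sigmaLoop (hM : M.PosDef) (L : ℙ ℂ (Fin n → ℂ)) (t : ℝ) : SL n :=
  ⟨lineDiag M L (star (exp (t * I)) ^ (n - 1)) (exp (t * I)), by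
    rw [det_lineDiag hM _ (exp_ne_zero _), ← mul_pow, star_mul_self_exp_mul_I, one_pow]⟩

variable (hM : M.PosDef) (L : ℙ ℂ (Fin n → ℂ))

lemma continuous_sigmaLoop : Continuous (sigmaLoop hM L) := by
  refine Continuous.subtype_mk ?_ _
  unfold lineDiag
  fun_prop

lemma sigmaLoop_mem_sigmaQ {N : Matrix (Fin n) (Fin n) ℂ} (hN : N.PosDef)
    (hperp : perp N L.submodule = perp M L.submodule) (t : ℝ) : sigmaLoop hM L t ∈ sigmaQ N L := by
  refine mem_sigmaQ_of_mulVec hN ?_ (star_mul_self_exp_mul_I t)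
    (fun v hv => lineDiag_mulVec_of_mem hM _ _ hv)
    (fun u hu => lineDiag_mulVec_of_mem_perp _ _ (hperp ▸ hu))
  rw [star_pow, star_star, ← mul_pow, mul_comm, star_mul_self_exp_mul_I, one_pow]

lemma centerSL_subset_range_sigmaLoop : centerSL n ⊆ Set.range (sigmaLoop hM L) := by
  rintro A ⟨ζ, hζ, hA⟩
  obtain ⟨k, rfl⟩ := Nat.exists_eq_add_one_of_ne_zero (ne_zero_of_projectivization L)
  have hnorm := norm_eq_one_of_pow_eq_one hζ k.succ_ne_zero
  have hexp : exp (arg ζ * I) = ζ := by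
    simpa [hnorm] using norm_mul_exp_arg_mul_I ζ
  have hstar : star ζ ^ k = ζ := by
    calc star ζ ^ k = star ζ ^ k * ζ ^ (k + 1) := by rw [hζ, mul_one]
      _ = (star ζ * ζ) ^ k * ζ := by ring
      _ = ζ := by rw [star_mul_self_eq_one_of_norm_eq_one hnorm, one_pow, one_mul]
  refine ⟨arg ζ, Subtype.ext ?_⟩
  simp only [sigmaLoop, hexp, Nat.add_sub_cancel, hstar, lineDiag, sub_self, zero_smul, add_zero, hA]

end Loop

theorem phi_compatible_general (n : ℕ) (hn : 8 ≤ n)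
    (φ : ContinuousMap.HomotopyEquiv (SL n) ↥(SUQ (1 : Matrix (Fin n) (Fin n) ℂ)))
    (hcen : MapsCenterOnto ⇑φ.toFun)
    (Q Q' : HerPos n) (L L' L'' : Projectivization ℂ (Fin n → ℂ))
    (hperp : perp Q.val L.submodule = perp Q'.val L.submodule)
    (h1 : ∀ A ∈ sigmaQ Q.val L, (φ.toFun A).val ∈ sigmaQ 1 L')
    (h2 : ∀ A ∈ sigmaQ Q'.val L, (φ.toFun A).val ∈ sigmaQ 1 L'') :
    L' = L'' := by
  by_contra hne
  set F := sigmaLoop Q.prop L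
  have hcentral (t : ℝ) : (φ.toFun (F t)).val ∈ centerSL n :=
    mem_centerSL_of_mem_sigmaQ_of_ne (by omega) PosDef.one hne
      (h1 _ (sigmaLoop_mem_sigmaQ Q.prop L Q.prop rfl t))
      (h2 _ (sigmaLoop_mem_sigmaQ Q.prop L Q'.prop hperp.symm t))
  have hfinite : {B : SUQ (1 : Matrix (Fin n) (Fin n) ℂ) | B.val ∈ centerSL n}.Finite :=
    (centerSL_finite (by omega)).preimage Subtype.val_injective.injOn
  have hconst (t : ℝ) : φ.toFun (F t) = φ.toFun (F 0) :=
    isPreconnected_univ.constant_of_mapsTo hfinite.isDiscrete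
      (φ.toFun.continuous.comp (continuous_sigmaLoop Q.prop L)).continuousOn
      (fun s _ => hcentral s) trivial trivial
  refine not_subsingleton_centerSU (n := n) (by omega) (hcen ▸ ?_)
  refine (Set.subsingleton_singleton (a := φ.toFun (F 0))).anti ?_
  rintro _ ⟨A, hA, rfl⟩
  obtain ⟨t, rfl⟩ := centerSL_subset_range_sigmaLoop Q.prop L hA
  exact hconst t

/-- if two positive definite Hermitian forms give the line `L` the same
orthogonal complement, then the corresponding lines `L'`, `L''` with
`φ(σ_Q^L) ⊆ σ_{Q₀}^{L'}` and `φ(σ_{Q'}^L) ⊆ σ_{Q₀}^{L''}` coincide. -/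
theorem phi_compatible (n : ℕ) (hn : 8 ≤ n)
    (φ : ContinuousMap.HomotopyEquiv (SL n) ↥(SUQ (1 : Matrix (Fin n) (Fin n) ℂ)))
    (hcomm : PreservesComm ⇑φ.toFun) (hcen : MapsCenterOnto ⇑φ.toFun)
    (Q Q' : HerPos n) (L L' L'' : Projectivization ℂ (Fin n → ℂ))
    (hperp : perp Q.val L.submodule = perp Q'.val L.submodule)
    (h1 : ∀ A ∈ sigmaQ Q.val L, (φ.toFun A).val ∈ sigmaQ 1 L')
    (h2 : ∀ A ∈ sigmaQ Q'.val L, (φ.toFun A).val ∈ sigmaQ 1 L'') :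
    L' = L'' :=
  phi_compatible_general n hn φ hcen Q Q' L L' L'' hperp h1 h2
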